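/- Let b ≥ 4, w ≥ 5 and x ≥ 5 be integers. Then k(bx, w) ≤ (bx)^w · x^(−0.73·w/ln(x)), as an inequality of real numbers. -/
import Mathlib

open Finset

/-! ### Auxiliary development: counting multipartitions -/

/-- Multipartitions of `w` with `n` colors, represented as tuples of multisets
of positive parts. -/
def MPset (n w : ℕ) : Type :=
  {g : Fin n → Multiset ℕ // (∀ i, ∀ x ∈ g i, 0 < x) ∧ (∑ i, (g i).sum) = w}

lemma count_mul_le_sum (s : Multiset ℕ) (d : ℕ) : s.count d * d ≤ s.sum := by
  induction s using Multiset.induction with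
  | empty => simp
  | cons a t ih =>
    rw [Multiset.count_cons, Multiset.sum_cons]
    by_cases h : d = a
    · subst h
      rw [if_pos rfl, add_mul, one_mul]
      linarith [ih]
    · simp only [if_neg h, add_zero]; omega

namespace MPset

variable {n w : ℕ}

lemma sum_color_le (g : MPset n w) (i : Fin n) : (g.1 i).sum ≤ w :=
  le_trans (Finset.single_le_sum (f := fun j => (g.1 j).sum)
    (fun j _ => Nat.zero_le ((g.1 j).sum)) (Finset.mem_univ i)) (le_of_eq g.2.2)

instance : Finite (MPset n w) := by
  let M0 : Multiset ℕ := w • (Finset.Icc 1 w).val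
  have key : ∀ (g : MPset n w) (i : Fin n), g.1 i ∈ M0.powerset.toFinset := by
    intro g i
    simp only [Multiset.mem_toFinset, Multiset.mem_powerset, M0]
    rw [Multiset.le_iff_count]
    intro d
    rw [Multiset.count_nsmul]
    by_cases hd : d ∈ Finset.Icc 1 w
    · rw [Multiset.count_eq_of_nodup (Finset.Icc 1 w).nodup,
        if_pos ((Finset.mem_val).mpr hd), mul_one]
      obtain ⟨h1, _⟩ := Finset.mem_Icc.mp hd
      calc (g.1 i).count d ≤ (g.1 i).count d * d := Nat.le_mul_of_pos_right _ h1
        _ ≤ (g.1 i).sum := count_mul_le_sum _ _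
        _ ≤ w := g.sum_color_le i
    · rw [Multiset.count_eq_zero.mpr (fun hmem => hd (Finset.mem_Icc.mpr
        ⟨g.2.1 i d hmem, le_trans (Multiset.single_le_sum (fun x _ => Nat.zero_le x) d hmem)
          (g.sum_color_le i)⟩))]
      exact Nat.zero_le _
  apply Finite.of_injective
    (fun g : MPset n w => fun i : Fin n =>
      (⟨g.1 i, key g i⟩ : {s : Multiset ℕ // s ∈ M0.powerset.toFinset}))
  intro g h hg
  apply Subtype.ext; funext i
  exact congrArg Subtype.val (congrFun hg i)

end MPset

/-- The number of `n`-multipartitions of `w`. -/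
noncomputable def KK (n w : ℕ) : ℕ := Nat.card (MPset n w)

lemma sum_update_sum {n : ℕ} (f : Fin n → Multiset ℕ) (i : Fin n) (s : Multiset ℕ) :
    ∑ i', (Function.update f i s i').sum + (f i).sum = (∑ i', (f i').sum) + s.sum := by
  classical
  rw [show (fun i' => (Function.update f i s i').sum)
        = Function.update (fun j => (f j).sum) i s.sum from
      funext (fun i' => Function.apply_update (fun _ v => Multiset.sum v) f i s i'),
    Finset.sum_update_of_mem (Finset.mem_univ i),
    Finset.sum_eq_add_sum_sdiff_singleton_of_mem (Finset.mem_univ i) (fun j => (f j).sum)]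
  omega

/-- Removing `m` copies of part `d` from color `i` is a bijection. -/
def removeEquiv (n w d m : ℕ) (i : Fin n) (hd : 1 ≤ d) (hdm : d * m ≤ w) :
    {M : MPset n w // m ≤ ((M.1 i).count d)} ≃ MPset n (w - d * m) where
  toFun M := by
    refine ⟨Function.update M.1.1 i (M.1.1 i - Multiset.replicate m d), ?_, ?_⟩
    · intro i' x hx
      rcases eq_or_ne i' i with rfl | hne
      · rw [Function.update_self] at hx
        exact M.1.2.1 i' x (Multiset.mem_of_le tsub_le_self hx)
      · rw [Function.update_of_ne hne] at hx
        exact M.1.2.1 i' x hx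
    · have hrep : Multiset.replicate m d ≤ M.1.1 i :=
        Multiset.le_count_iff_replicate_le.mp M.2
      have hsub : (M.1.1 i - Multiset.replicate m d).sum + d * m = (M.1.1 i).sum := by
        have := congrArg Multiset.sum (tsub_add_cancel_of_le hrep)
        rwa [Multiset.sum_add, Multiset.sum_replicate, smul_eq_mul, mul_comm m d] at this
      have hple : (M.1.1 i).sum ≤ w := M.1.sum_color_le i
      have hU := sum_update_sum M.1.1 i (M.1.1 i - Multiset.replicate m d)
      have horig : (∑ i', (M.1.1 i').sum) = w := M.1.2.2
      omega
  invFun N := by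
    refine ⟨⟨Function.update N.1 i (N.1 i + Multiset.replicate m d), ?_, ?_⟩, ?_⟩
    · intro i' x hx
      rcases eq_or_ne i' i with rfl | hne
      · rw [Function.update_self, Multiset.mem_add] at hx
        rcases hx with hx | hx
        · exact N.2.1 i' x hx
        · rw [Multiset.eq_of_mem_replicate hx]; exact hd
      · rw [Function.update_of_ne hne] at hx
        exact N.2.1 i' x hx
    · have hU := sum_update_sum N.1 i (N.1 i + Multiset.replicate m d)
      have hadd : (N.1 i + Multiset.replicate m d).sum = (N.1 i).sum + d * m := by
        rw [Multiset.sum_add, Multiset.sum_replicate, smul_eq_mul, mul_comm m d]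
      have horig : (∑ i', (N.1 i').sum) = w - d * m := N.2.2
      omega
    · show m ≤ Multiset.count d (Function.update N.1 i (N.1 i + Multiset.replicate m d) i)
      rw [Function.update_self, Multiset.count_add, Multiset.count_replicate_self]
      omega
  left_inv M := by
    apply Subtype.ext; apply Subtype.ext; funext i'
    dsimp only
    rcases eq_or_ne i' i with rfl | hne
    · simp only [Function.update_self,
        tsub_add_cancel_of_le (Multiset.le_count_iff_replicate_le.mp M.2)]
    · simp only [Function.update_of_ne hne]
  right_inv N := by
    apply Subtype.ext; funext i'
    dsimp only
    rcases eq_or_ne i' i with rfl | hne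
    · simp only [Function.update_self, add_tsub_cancel_right]
    · simp only [Function.update_of_ne hne]

open scoped Classical in
lemma inner_count (n w d m : ℕ) (i : Fin n) (hd : 1 ≤ d)
    [Fintype (MPset n w)] :
    ∑ M : MPset n w, (if m ≤ ((M.1 i).count d) then d else 0)
      = (if d * m ≤ w then KK n (w - d * m) else 0) * d := by
  rw [← Finset.sum_filter, Finset.sum_const, smul_eq_mul]
  congr 1
  by_cases hdm : d * m ≤ w
  · rw [if_pos hdm, ← Fintype.card_subtype, ← Nat.card_eq_fintype_card]
    exact Nat.card_congr (removeEquiv n w d m i hd hdm)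
  · rw [if_neg hdm, Finset.card_eq_zero]
    rw [Finset.eq_empty_iff_forall_notMem]
    intro M hM
    rw [Finset.mem_filter] at hM
    apply hdm
    calc d * m ≤ d * ((M.1 i).count d) := Nat.mul_le_mul_left d hM.2
      _ = ((M.1 i).count d) * d := mul_comm _ _
      _ ≤ (M.1 i).sum := count_mul_le_sum _ _
      _ ≤ w := M.sum_color_le i

lemma multiset_sum_expand (w : ℕ) (s : Multiset ℕ) (hpos : ∀ x ∈ s, 0 < x) (hle : s.sum ≤ w) :
    s.sum = ∑ d ∈ Finset.Icc 1 w, s.count d * d := by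
  induction s using Multiset.induction with
  | empty => simp
  | cons a t ih =>
    rw [Multiset.sum_cons] at hle ⊢
    have hpos' : ∀ x ∈ t, 0 < x := fun x hx => hpos x (Multiset.mem_cons_of_mem hx)
    have ha : a ∈ Finset.Icc 1 w :=
      Finset.mem_Icc.mpr ⟨hpos a (Multiset.mem_cons_self a t), by omega⟩
    have : ∀ d, Multiset.count d (a ::ₘ t) * d
        = Multiset.count d t * d + if d = a then d else 0 := by
      intro d
      rw [Multiset.count_cons]
      rcases eq_or_ne d a with rfl | h
      · rw [if_pos rfl, if_pos rfl, add_mul, one_mul]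
      · rw [if_neg h, if_neg h, add_zero, add_zero]
    rw [Finset.sum_congr rfl (fun d _ => this d), Finset.sum_add_distrib,
      Finset.sum_ite_eq' (Finset.Icc 1 w) a (fun d => d), if_pos ha, ← ih hpos' (by omega)]
    omega

lemma count_expand (w c d : ℕ) (hc : c ≤ w) :
    c * d = ∑ m ∈ Finset.Icc 1 w, if m ≤ c then d else 0 := by
  rw [← Finset.sum_filter]
  have : Finset.filter (fun m => m ≤ c) (Finset.Icc 1 w) = Finset.Icc 1 c := by
    ext m; simp only [Finset.mem_filter, Finset.mem_Icc]; omega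
  rw [this, Finset.sum_const, Nat.card_Icc, smul_eq_mul, Nat.add_sub_cancel]

lemma pair_regroup (n w : ℕ) :
    ∑ p ∈ (Finset.Icc 1 w) ×ˢ (Finset.Icc 1 w),
        (if p.1 * p.2 ≤ w then KK n (w - p.1 * p.2) else 0) * p.1
      = ∑ j ∈ Finset.Icc 1 w, KK n (w - j) * ∑ d ∈ j.divisors, d := by
  classical
  have hset : Finset.filter (fun p : ℕ × ℕ => p.1 * p.2 ≤ w)
        ((Finset.Icc 1 w) ×ˢ (Finset.Icc 1 w))
      = (Finset.Icc 1 w).biUnion (fun j => j.divisorsAntidiagonal) := by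
    ext p
    simp only [Finset.mem_filter, Finset.mem_product, Finset.mem_Icc, Finset.mem_biUnion,
      Nat.mem_divisorsAntidiagonal]
    constructor
    · rintro ⟨⟨⟨h1, h2⟩, h3, h4⟩, h5⟩
      exact ⟨p.1 * p.2, ⟨Nat.one_le_iff_ne_zero.mpr (by positivity), h5⟩, rfl, by positivity⟩
    · rintro ⟨j, ⟨hj1, hj2⟩, rfl, hj0⟩
      have h1 : 1 ≤ p.1 := Nat.one_le_iff_ne_zero.mpr fun h => by simp [h] at hj1
      have h2 : 1 ≤ p.2 := Nat.one_le_iff_ne_zero.mpr fun h => by simp [h] at hj1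
      refine ⟨⟨⟨h1, ?_⟩, h2, ?_⟩, hj2⟩
      · calc p.1 ≤ p.1 * p.2 := Nat.le_mul_of_pos_right _ h2
          _ ≤ w := hj2
      · calc p.2 ≤ p.1 * p.2 := Nat.le_mul_of_pos_left _ h1
          _ ≤ w := hj2
  have hdisj : (↑(Finset.Icc 1 w) : Set ℕ).PairwiseDisjoint
      (fun j => j.divisorsAntidiagonal) := by
    intro j1 _ j2 _ hne
    refine Finset.disjoint_left.mpr fun p h1 h2 => hne ?_
    rw [Nat.mem_divisorsAntidiagonal] at h1 h2
    rw [← h1.1, ← h2.1]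
  calc ∑ p ∈ (Finset.Icc 1 w) ×ˢ (Finset.Icc 1 w),
        (if p.1 * p.2 ≤ w then KK n (w - p.1 * p.2) else 0) * p.1
      = ∑ p ∈ (Finset.Icc 1 w) ×ˢ (Finset.Icc 1 w),
          (if p.1 * p.2 ≤ w then KK n (w - p.1 * p.2) * p.1 else 0) := by
        refine Finset.sum_congr rfl fun p _ => ?_
        rw [ite_mul, zero_mul]
    _ = ∑ p ∈ Finset.filter (fun p : ℕ × ℕ => p.1 * p.2 ≤ w)
          ((Finset.Icc 1 w) ×ˢ (Finset.Icc 1 w)), KK n (w - p.1 * p.2) * p.1 :=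
        (Finset.sum_filter _ _).symm
    _ = ∑ j ∈ Finset.Icc 1 w, ∑ p ∈ j.divisorsAntidiagonal, KK n (w - p.1 * p.2) * p.1 := by
        rw [hset, Finset.sum_biUnion hdisj]
    _ = ∑ j ∈ Finset.Icc 1 w, ∑ p ∈ j.divisorsAntidiagonal, KK n (w - j) * p.1 := by
        refine Finset.sum_congr rfl fun j _ => Finset.sum_congr rfl fun p hp => ?_
        rw [(Nat.mem_divisorsAntidiagonal.mp hp).1]
    _ = ∑ j ∈ Finset.Icc 1 w, KK n (w - j) * ∑ p ∈ j.divisorsAntidiagonal, p.1 := by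
        refine Finset.sum_congr rfl fun j _ => ?_
        rw [Finset.mul_sum]
    _ = ∑ j ∈ Finset.Icc 1 w, KK n (w - j) * ∑ d ∈ j.divisors, d := by
        refine Finset.sum_congr rfl fun j _ => ?_
        rw [Nat.sum_divisorsAntidiagonal (fun a _ => a)]

/-- The key recursion `w ⬝ K(n,w) = n ∑_{j=1}^{w} σ(j) K(n, w-j)`. -/
lemma KK_rec (n w : ℕ) :
    w * KK n w = n * ∑ j ∈ Finset.Icc 1 w, KK n (w - j) * ∑ d ∈ j.divisors, d := by
  classical
  letI : Fintype (MPset n w) := Fintype.ofFinite _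
  calc w * KK n w = ∑ _M : MPset n w, w := by
        rw [Finset.sum_const, Finset.card_univ, ← Nat.card_eq_fintype_card]
        exact (Nat.mul_comm _ _) ▸ rfl
    _ = ∑ M : MPset n w, ∑ i, (M.1 i).sum := Finset.sum_congr rfl fun M _ => M.2.2.symm
    _ = ∑ M : MPset n w, ∑ i, ∑ d ∈ Finset.Icc 1 w, ((M.1 i).count d) * d := by
        refine Finset.sum_congr rfl fun M _ => Finset.sum_congr rfl fun i _ => ?_
        exact multiset_sum_expand w (M.1 i) (fun x hx => M.2.1 i x hx) (M.sum_color_le i)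
    _ = ∑ M : MPset n w, ∑ i, ∑ d ∈ Finset.Icc 1 w, ∑ m ∈ Finset.Icc 1 w,
          (if m ≤ ((M.1 i).count d) then d else 0) := by
        refine Finset.sum_congr rfl fun M _ => Finset.sum_congr rfl fun i _ =>
          Finset.sum_congr rfl fun d hd => ?_
        refine count_expand w _ d ?_
        obtain ⟨h1, _⟩ := Finset.mem_Icc.mp hd
        calc (M.1 i).count d ≤ ((M.1 i).count d) * d := Nat.le_mul_of_pos_right _ h1
          _ ≤ (M.1 i).sum := count_mul_le_sum _ _
          _ ≤ w := M.sum_color_le i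
    _ = ∑ i : Fin n, ∑ d ∈ Finset.Icc 1 w, ∑ m ∈ Finset.Icc 1 w, ∑ M : MPset n w,
          (if m ≤ ((M.1 i).count d) then d else 0) := by
        rw [Finset.sum_comm]
        refine Finset.sum_congr rfl fun i _ => ?_
        rw [Finset.sum_comm]
        refine Finset.sum_congr rfl fun d _ => ?_
        rw [Finset.sum_comm]
    _ = ∑ i : Fin n, ∑ d ∈ Finset.Icc 1 w, ∑ m ∈ Finset.Icc 1 w,
          (if d * m ≤ w then KK n (w - d * m) else 0) * d := by
        refine Finset.sum_congr rfl fun i _ => Finset.sum_congr rfl fun d hd =>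
          Finset.sum_congr rfl fun m hm => ?_
        exact inner_count n w d m i (Finset.mem_Icc.mp hd).1
    _ = ∑ _i : Fin n, ∑ p ∈ (Finset.Icc 1 w) ×ˢ (Finset.Icc 1 w),
          (if p.1 * p.2 ≤ w then KK n (w - p.1 * p.2) else 0) * p.1 := by
        refine Finset.sum_congr rfl fun i _ => ?_
        rw [Finset.sum_product]
    _ = n * ∑ j ∈ Finset.Icc 1 w, KK n (w - j) * ∑ d ∈ j.divisors, d := by
        rw [Finset.sum_const, Finset.card_univ, Fintype.card_fin, smul_eq_mul, pair_regroup]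

lemma KK_zero (n : ℕ) : KK n 0 = 1 := by
  rw [KK, Nat.card_eq_one_iff_unique]
  have hg : ∀ (u : MPset n 0) (i : Fin n), u.1 i = 0 := by
    intro u i
    have hsum : (u.1 i).sum = 0 := by
      have h0 := u.2.2
      have h1 : (u.1 i).sum ≤ ∑ i', (u.1 i').sum :=
        Finset.single_le_sum (f := fun j => (u.1 j).sum) (fun j _ => Nat.zero_le _)
          (Finset.mem_univ i)
      omega
    rw [Multiset.eq_zero_iff_forall_notMem]
    intro x hx
    have h2 := u.2.1 i x hx
    have h3 : x ≤ (u.1 i).sum := Multiset.single_le_sum (fun y _ => Nat.zero_le y) x hx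
    omega
  constructor
  · constructor
    intro g h
    apply Subtype.ext; funext i
    rw [hg g i, hg h i]
  · exact ⟨⟨fun _ => 0, fun i x hx => absurd hx (Multiset.notMem_zero x), by simp⟩⟩

section smallvalues

variable (n : ℕ)

-- expand the recursion explicitly for w ≤ 5
lemma kkrec5 :
    5 * KK n 5 = n * (KK n 4 * 1 + KK n 3 * 3 + KK n 2 * 4 + KK n 1 * 7 + KK n 0 * 6) ∧
    4 * KK n 4 = n * (KK n 3 * 1 + KK n 2 * 3 + KK n 1 * 4 + KK n 0 * 7) ∧
    3 * KK n 3 = n * (KK n 2 * 1 + KK n 1 * 3 + KK n 0 * 4) ∧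
    2 * KK n 2 = n * (KK n 1 * 1 + KK n 0 * 3) ∧
    1 * KK n 1 = n * (KK n 0 * 1) := by
  have d1 : (∑ d ∈ Nat.divisors 1, d) = 1 := by decide
  have d2 : (∑ d ∈ Nat.divisors 2, d) = 3 := by decide
  have d3 : (∑ d ∈ Nat.divisors 3, d) = 4 := by decide
  have d4 : (∑ d ∈ Nat.divisors 4, d) = 7 := by decide
  have d5 : (∑ d ∈ Nat.divisors 5, d) = 6 := by decide
  refine ⟨?_, ?_, ?_, ?_, ?_⟩
  · have h := KK_rec n 5
    rw [show Finset.Icc 1 5 = insert 1 (insert 2 (insert 3 (insert 4 {5}))) by decide] at h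
    rw [Finset.sum_insert (by decide), Finset.sum_insert (by decide),
      Finset.sum_insert (by decide), Finset.sum_insert (by decide),
      Finset.sum_singleton, d1, d2, d3, d4, d5] at h
    rw [h]; try ring
  · have h := KK_rec n 4
    rw [show Finset.Icc 1 4 = insert 1 (insert 2 (insert 3 ({4} : Finset ℕ))) by decide] at h
    rw [Finset.sum_insert (by decide), Finset.sum_insert (by decide),
      Finset.sum_insert (by decide), Finset.sum_singleton, d1, d2, d3, d4] at h
    rw [h]; try ring
  · have h := KK_rec n 3
    rw [show Finset.Icc 1 3 = insert 1 (insert 2 ({3} : Finset ℕ)) by decide] at h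
    rw [Finset.sum_insert (by decide), Finset.sum_insert (by decide),
      Finset.sum_singleton, d1, d2, d3] at h
    rw [h]; try ring
  · have h := KK_rec n 2
    rw [show Finset.Icc 1 2 = insert 1 ({2} : Finset ℕ) by decide] at h
    rw [Finset.sum_insert (by decide), Finset.sum_singleton, d1, d2] at h
    rw [h]; try ring
  · have h := KK_rec n 1
    rw [show Finset.Icc 1 1 = ({1} : Finset ℕ) by decide] at h
    rw [Finset.sum_singleton, d1] at h
    rw [h]; try ring

lemma kk0R : ((KK n 0 : ℕ) : ℝ) = 1 := by rw [KK_zero]; norm_num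

lemma kk_values :
    ((KK n 1 : ℕ) : ℝ) = n ∧
    ((KK n 2 : ℕ) : ℝ) = ((n:ℝ)^2 + 3*n)/2 ∧
    ((KK n 3 : ℕ) : ℝ) = ((n:ℝ)^3 + 9*(n:ℝ)^2 + 8*n)/6 ∧
    ((KK n 4 : ℕ) : ℝ) = ((n:ℝ)^4 + 18*(n:ℝ)^3 + 59*(n:ℝ)^2 + 42*n)/24 ∧
    ((KK n 5 : ℕ) : ℝ) = ((n:ℝ)^5 + 30*(n:ℝ)^4 + 215*(n:ℝ)^3 + 450*(n:ℝ)^2 + 144*n)/120 := by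
  obtain ⟨r5, r4, r3, r2, r1⟩ := kkrec5 n
  have c0 := kk0R n
  have c1 : ((KK n 1 : ℕ) : ℝ) = n := by
    have := congrArg (fun t : ℕ => (t : ℝ)) r1
    push_cast at this
    rw [c0] at this; linarith
  have c2 : ((KK n 2 : ℕ) : ℝ) = ((n:ℝ)^2 + 3*n)/2 := by
    have := congrArg (fun t : ℕ => (t : ℝ)) r2
    push_cast at this
    rw [c0, c1] at this; linarith [this]
  have c3 : ((KK n 3 : ℕ) : ℝ) = ((n:ℝ)^3 + 9*(n:ℝ)^2 + 8*n)/6 := by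
    have := congrArg (fun t : ℕ => (t : ℝ)) r3
    push_cast at this
    rw [c0, c1, c2] at this; linarith [this]
  have c4 : ((KK n 4 : ℕ) : ℝ) = ((n:ℝ)^4 + 18*(n:ℝ)^3 + 59*(n:ℝ)^2 + 42*n)/24 := by
    have := congrArg (fun t : ℕ => (t : ℝ)) r4
    push_cast at this
    rw [c0, c1, c2, c3] at this; linarith [this]
  have c5 : ((KK n 5 : ℕ) : ℝ) = ((n:ℝ)^5 + 30*(n:ℝ)^4 + 215*(n:ℝ)^3 + 450*(n:ℝ)^2 + 144*n)/120 := by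
    have := congrArg (fun t : ℕ => (t : ℝ)) r5
    push_cast at this
    rw [c0, c1, c2, c3, c4] at this; linarith [this]
  exact ⟨c1, c2, c3, c4, c5⟩

end smallvalues

/-! ### sigma bound -/

lemma mul_le_nine_pow (j : ℕ) (hj : 2 ≤ j) : j * (j + 1) ≤ 9 * 2 ^ (j - 2) := by
  induction j, hj using Nat.le_induction with
  | base => norm_num
  | succ j hj ih =>
    have e : j + 1 - 2 = (j - 2) + 1 := by omega
    rw [e, pow_succ]
    calc (j + 1) * (j + 1 + 1) ≤ 2 * (j * (j + 1)) := by nlinarith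
      _ ≤ 2 * (9 * 2 ^ (j - 2)) := Nat.mul_le_mul_left 2 ih
      _ = 9 * (2 ^ (j - 2) * 2) := by ring

lemma sigma_le_pow (j : ℕ) (hj : 2 ≤ j) :
    2 * (∑ d ∈ Nat.divisors j, d) ≤ 9 * 2 ^ (j - 2) := by
  have h1 : ∑ d ∈ Nat.divisors j, d ≤ ∑ d ∈ Finset.Icc 1 j, d := by
    apply Finset.sum_le_sum_of_subset
    intro d hd
    exact Finset.mem_Icc.mpr ⟨Nat.pos_of_mem_divisors hd, Nat.divisor_le hd⟩
  have h2 : 2 * ∑ d ∈ Finset.Icc 1 j, d = j * (j + 1) := by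
    have hr : Finset.range (j + 1) = insert 0 (Finset.Icc 1 j) := by
      ext x; simp only [Finset.mem_range, Finset.mem_insert, Finset.mem_Icc]; omega
    have t := Finset.sum_range_id_mul_two (j + 1)
    rw [hr, Finset.sum_insert (by simp), zero_add] at t
    simp only [Nat.add_sub_cancel] at t
    linarith [t]
  have h3 := mul_le_nine_pow j hj
  omega

lemma sigma_le_powR (j : ℕ) (hj : 2 ≤ j) :
    (∑ d ∈ Nat.divisors j, (d : ℝ)) ≤ 9/2 * 2 ^ (j - 2) := by
  have := sigma_le_pow j hj
  have : ((2 * (∑ d ∈ Nat.divisors j, d) : ℕ) : ℝ) ≤ ((9 * 2 ^ (j - 2) : ℕ) : ℝ) := by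
    exact_mod_cast this
  push_cast at this ⊢
  linarith

/-! ### real analysis -/

lemma geom_bound (r : ℝ) (h0 : 0 ≤ r) (h1 : r < 1) (m : ℕ) :
    ∑ i ∈ Finset.range m, r ^ i ≤ 1 / (1 - r) := by
  have hne : r ≠ 1 := ne_of_lt h1
  have heq : (r ^ m - 1) / (r - 1) = (1 - r ^ m) / (1 - r) := by
    rw [← neg_sub (r ^ m) (1 : ℝ), ← neg_sub r (1 : ℝ), neg_div_neg_eq]
  rw [geom_sum_eq hne, heq, div_le_div_iff₀ (by linarith) (by linarith)]
  nlinarith [pow_nonneg h0 m]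

lemma exp073_le : Real.exp 0.73 ≤ 10000 / 4819 := by
  have h1 : Real.exp 73 = Real.exp 1 ^ (73 : ℕ) := by
    rw [← Real.exp_nat_mul]; norm_num
  have h2 : Real.exp 1 ^ (73 : ℕ) ≤ (2.7182818286 : ℝ) ^ (73 : ℕ) :=
    pow_le_pow_left₀ (Real.exp_nonneg 1) (le_of_lt Real.exp_one_lt_d9) 73
  have h3 : (2.7182818286 : ℝ) ^ (73 : ℕ) ≤ (10000 / 4819 : ℝ) ^ (100 : ℕ) := by norm_num
  have key : Real.exp 0.73 ^ (100 : ℕ) ≤ (10000 / 4819 : ℝ) ^ (100 : ℕ) := by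
    rw [← Real.exp_nat_mul]
    calc Real.exp (100 * 0.73) = Real.exp 73 := by norm_num
      _ ≤ _ := by rw [h1]; exact le_trans h2 h3
  exact le_of_pow_le_pow_left₀ (by norm_num) (by norm_num) key

lemma exp365_le : Real.exp 3.65 ≤ 10000 / 259 := by
  have h1 : Real.exp 73 = Real.exp 1 ^ (73 : ℕ) := by
    rw [← Real.exp_nat_mul]; norm_num
  have h2 : Real.exp 1 ^ (73 : ℕ) ≤ (2.7182818286 : ℝ) ^ (73 : ℕ) :=
    pow_le_pow_left₀ (Real.exp_nonneg 1) (le_of_lt Real.exp_one_lt_d9) 73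
  have h3 : (2.7182818286 : ℝ) ^ (73 : ℕ) ≤ (10000 / 259 : ℝ) ^ (20 : ℕ) := by norm_num
  have key : Real.exp 3.65 ^ (20 : ℕ) ≤ (10000 / 259 : ℝ) ^ (20 : ℕ) := by
    rw [← Real.exp_nat_mul]
    calc Real.exp (20 * 3.65) = Real.exp 73 := by norm_num
      _ ≤ _ := by rw [h1]; exact le_trans h2 h3
  exact le_of_pow_le_pow_left₀ (by norm_num) (by norm_num) key

lemma c_ge : (0.4819 : ℝ) ≤ Real.exp (-0.73) := by
  rw [Real.exp_neg]
  calc (0.4819 : ℝ) = (10000 / 4819 : ℝ)⁻¹ := by norm_num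
    _ ≤ (Real.exp 0.73)⁻¹ := inv_anti₀ (Real.exp_pos _) exp073_le

lemma c5_ge : (0.0259 : ℝ) ≤ Real.exp (-0.73) ^ (5 : ℕ) := by
  have h : Real.exp (-0.73) ^ (5 : ℕ) = (Real.exp 3.65)⁻¹ := by
    rw [← Real.exp_nat_mul, ← Real.exp_neg]
    norm_num
  rw [h]
  calc (0.0259 : ℝ) ≤ (10000 / 259 : ℝ)⁻¹ := by norm_num
    _ ≤ (Real.exp 3.65)⁻¹ := inv_anti₀ (Real.exp_pos _) exp365_le

/-! ### the small-degree inequalities -/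

lemma small_bounds (n : ℕ) (hn : 20 ≤ n) (u : ℕ) (hu : u ≤ 4) :
    ((KK n u : ℕ) : ℝ) ≤ 5/2 * (Real.exp (-0.73) * n) ^ u := by
  set c : ℝ := Real.exp (-0.73) with hcdef
  have hc : (0.4819 : ℝ) ≤ c := c_ge
  have hcpos : (0 : ℝ) < c := Real.exp_pos _
  have hnR : (20 : ℝ) ≤ (n : ℝ) := by exact_mod_cast hn
  have hnpos : (0 : ℝ) < (n : ℝ) := by linarith
  obtain ⟨c1, c2, c3, c4, _⟩ := kk_values n
  interval_cases u
  · rw [kk0R, pow_zero]; norm_num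
  · rw [c1, pow_one]; nlinarith
  · rw [c2, mul_pow]
    have hc2 : (0.4819 : ℝ)^2 ≤ c^2 := pow_le_pow_left₀ (by norm_num) hc 2
    nlinarith [mul_le_mul_of_nonneg_right hc2 (sq_nonneg (n:ℝ)),
      mul_nonneg (sub_nonneg.mpr hnR) hnpos.le]
  · rw [c3, mul_pow]
    have hc3 : (0.4819 : ℝ)^3 ≤ c^3 := pow_le_pow_left₀ (by norm_num) hc 3
    nlinarith [mul_le_mul_of_nonneg_right hc3 (pow_nonneg hnpos.le 3),
      mul_nonneg (mul_nonneg (sub_nonneg.mpr hnR) hnpos.le) hnpos.le,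
      mul_nonneg (sub_nonneg.mpr hnR) hnpos.le]
  · rw [c4, mul_pow]
    have hc4 : (0.4819 : ℝ)^4 ≤ c^4 := pow_le_pow_left₀ (by norm_num) hc 4
    nlinarith [mul_le_mul_of_nonneg_right hc4 (pow_nonneg hnpos.le 4),
      mul_nonneg (mul_nonneg (mul_nonneg (sub_nonneg.mpr hnR) hnpos.le) hnpos.le) hnpos.le,
      mul_nonneg (mul_nonneg (sub_nonneg.mpr hnR) hnpos.le) hnpos.le,
      mul_nonneg (sub_nonneg.mpr hnR) hnpos.le]

lemma base_case (n : ℕ) (hn : 20 ≤ n) :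
    ((KK n 5 : ℕ) : ℝ) ≤ (Real.exp (-0.73) * n) ^ (5 : ℕ) := by
  set c : ℝ := Real.exp (-0.73) with hcdef
  have hc5 : (0.0259 : ℝ) ≤ c^(5:ℕ) := c5_ge
  have hnR : (20 : ℝ) ≤ (n : ℝ) := by exact_mod_cast hn
  have hnpos : (0 : ℝ) < (n : ℝ) := by linarith
  have hm : (0:ℝ) ≤ (n:ℝ) - 20 := by linarith
  obtain ⟨_, _, _, _, c5⟩ := kk_values n
  rw [c5, mul_pow]
  have iden : 527*(n:ℝ)^5 - 7500*(n:ℝ)^4 - 53750*(n:ℝ)^3 - 112500*(n:ℝ)^2 - 36000*(n:ℝ)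
      = 527*((n:ℝ)-20)^5 + 45200*((n:ℝ)-20)^4 + 1454250*((n:ℝ)-20)^3
        + 20822500*((n:ℝ)-20)^2 + 112564000*((n:ℝ)-20) + 10680000 := by ring
  have hpoly : (n:ℝ)^5 + 30*(n:ℝ)^4 + 215*(n:ℝ)^3 + 450*(n:ℝ)^2 + 144*(n:ℝ)
      ≤ 3.108 * (n:ℝ)^5 := by
    nlinarith [pow_nonneg hm 5, pow_nonneg hm 4, pow_nonneg hm 3, pow_nonneg hm 2, hm, iden]
  have h59 : (0:ℝ) ≤ (n:ℝ)^5 := pow_nonneg hnpos.le 5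
  nlinarith [mul_le_mul_of_nonneg_right hc5 h59]

lemma KK_le : ∀ w : ℕ, 5 ≤ w → ∀ n : ℕ, 20 ≤ n →
    ((KK n w : ℕ) : ℝ) ≤ (Real.exp (-0.73) * n) ^ w := by
  intro w
  induction w using Nat.strong_induction_on with
  | _ w IH =>
    intro hw n hn
    rcases eq_or_lt_of_le hw with heq | hlt
    · rw [← heq]; exact base_case n hn
    · have hw6 : 6 ≤ w := hlt
      set c : ℝ := Real.exp (-0.73) with hcdef
      have hc : (0.4819 : ℝ) ≤ c := c_ge
      have hcpos : (0 : ℝ) < c := Real.exp_pos _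
      have hnR : (20 : ℝ) ≤ (n : ℝ) := by exact_mod_cast hn
      have hnpos : (0 : ℝ) < (n : ℝ) := by linarith
      have hx : (9.638 : ℝ) ≤ c * n := by nlinarith
      have hxpos : (0 : ℝ) < c * n := by linarith
      have hx2 : (0 : ℝ) < c * n - 2 := by linarith
      -- uniform bound on smaller indices
      have hall : ∀ u : ℕ, u < w → ((KK n u : ℕ) : ℝ) ≤ 5/2 * (c * n) ^ u := by
        intro u hu
        by_cases hu4 : u ≤ 4
        · exact small_bounds n hn u hu4
        · have h5 : 5 ≤ u := by omega
          have h := IH u hu h5 n hn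
          nlinarith [pow_nonneg hxpos.le u]
      -- cast the recursion to ℝ
      have hrecN := KK_rec n w
      have hrec : (w : ℝ) * ((KK n w : ℕ) : ℝ)
          = (n : ℝ) * ∑ j ∈ Finset.Icc 1 w,
              ((KK n (w - j) : ℕ) : ℝ) * (∑ d ∈ j.divisors, (d : ℝ)) := by
        have := congrArg (fun t : ℕ => (t : ℝ)) hrecN
        push_cast at this
        exact this
      have hsplit : Finset.Icc 1 w = insert 1 (Finset.Icc 2 w) := by
        ext j; simp only [Finset.mem_Icc, Finset.mem_insert]; omega
      have h1mem : (1 : ℕ) ∉ Finset.Icc 2 w := by simp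
      rw [hsplit, Finset.sum_insert h1mem] at hrec
      have hd1 : (∑ d ∈ Nat.divisors 1, (d : ℝ)) = 1 := by
        rw [Nat.divisors_one, Finset.sum_singleton]; norm_num
      rw [hd1, mul_one] at hrec
      -- bound the j = 1 term
      have hKw1 : ((KK n (w - 1) : ℕ) : ℝ) ≤ (c * n) ^ (w - 1) :=
        IH (w - 1) (by omega) (by omega) n hn
      -- bound the tail
      have hinner : ∑ j ∈ Finset.Icc 2 w, (2:ℝ)^(j-2) * (c*n)^(w-j)
          ≤ (c*n)^(w-1) / (c*n - 2) := by
        have hIco : Finset.Icc 2 w = Finset.Ico 2 (w+1) := by rw [Finset.Ico_add_one_right_eq_Icc]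
        rw [hIco, Finset.sum_Ico_eq_sum_range]
        have hw12 : w + 1 - 2 = w - 1 := by omega
        rw [hw12]
        have hterm : ∀ i ∈ Finset.range (w-1), (2:ℝ)^((2+i)-2) * (c*n)^(w-(2+i))
            = (c*n)^(w-2) * (2/(c*n))^i := by
          intro i hi
          have hiw : i ≤ w - 2 := by have := Finset.mem_range.mp hi; omega
          have e1 : (2+i) - 2 = i := by omega
          have e2 : w - (2+i) = (w-2) - i := by omega
          rw [e1, e2, div_pow, pow_sub₀ _ (ne_of_gt hxpos) hiw]
          field_simp
          try ring
        rw [Finset.sum_congr rfl hterm, ← Finset.mul_sum]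
        have hgeo : ∑ i ∈ Finset.range (w-1), (2/(c*n))^i ≤ 1/(1 - 2/(c*n)) :=
          geom_bound _ (by positivity) (by rw [div_lt_one hxpos]; linarith) _
        have hpow : (c*n)^(w-1) = (c*n)^(w-2) * (c*n) := by
          rw [← pow_succ]; congr 1; omega
        calc (c*n)^(w-2) * ∑ i ∈ Finset.range (w-1), (2/(c*n))^i
            ≤ (c*n)^(w-2) * (1/(1-2/(c*n))) :=
              mul_le_mul_of_nonneg_left hgeo (by positivity)
          _ = (c*n)^(w-1) / (c*n-2) := by
              rw [one_sub_div (ne_of_gt hxpos), one_div_div, hpow]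
              field_simp
              try ring
      have htail : ∑ j ∈ Finset.Icc 2 w, ((KK n (w-j) : ℕ) : ℝ) * (∑ d ∈ j.divisors, (d:ℝ))
          ≤ (45/4) * ((c*n)^(w-1) / (c*n - 2)) := by
        calc ∑ j ∈ Finset.Icc 2 w, ((KK n (w-j) : ℕ) : ℝ) * (∑ d ∈ j.divisors, (d:ℝ))
            ≤ ∑ j ∈ Finset.Icc 2 w, (45/4) * ((2:ℝ)^(j-2) * (c*n)^(w-j)) := by
              apply Finset.sum_le_sum
              intro j hj
              obtain ⟨hj2, hjw⟩ := Finset.mem_Icc.mp hj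
              have hKb : ((KK n (w-j) : ℕ) : ℝ) ≤ 5/2 * (c*n)^(w-j) := hall (w-j) (by omega)
              have hsb : (∑ d ∈ j.divisors, (d:ℝ)) ≤ 9/2 * 2^(j-2) := sigma_le_powR j hj2
              have hsnn : (0:ℝ) ≤ ∑ d ∈ j.divisors, (d:ℝ) := by positivity
              calc ((KK n (w-j) : ℕ) : ℝ) * (∑ d ∈ j.divisors, (d:ℝ))
                  ≤ (5/2 * (c*n)^(w-j)) * (9/2 * (2:ℝ)^(j-2)) :=
                    mul_le_mul hKb hsb hsnn (by positivity)
                _ = (45/4) * ((2:ℝ)^(j-2) * (c*n)^(w-j)) := by ring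
          _ = (45/4) * ∑ j ∈ Finset.Icc 2 w, (2:ℝ)^(j-2) * (c*n)^(w-j) := by
              rw [Finset.mul_sum]
          _ ≤ (45/4) * ((c*n)^(w-1) / (c*n - 2)) :=
              mul_le_mul_of_nonneg_left hinner (by norm_num)
      -- combine
      have hwR : (6:ℝ) ≤ (w:ℝ) := by exact_mod_cast hw6
      have hwpos : (0:ℝ) < (w:ℝ) := by linarith
      have hcoef : 1 + (45/4)/(c*n - 2) ≤ (w:ℝ) * c := by
        have h1 : (45/4:ℝ)/(c*n-2) ≤ (45/4)/(7.638) := by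
          apply div_le_div_of_nonneg_left (by norm_num) (by norm_num) (by linarith)
        have h2 : (6:ℝ) * 0.4819 ≤ (w:ℝ) * c :=
          mul_le_mul hwR hc (by norm_num) (by linarith)
        nlinarith
      have hpw : (c*n)^w = (c*n)^(w-1) * (c*n) := by
        rw [← pow_succ]; congr 1; omega
      have hfin : (w:ℝ) * ((KK n w : ℕ) : ℝ)
          ≤ (n:ℝ) * ((c*n)^(w-1) * (1 + (45/4)/(c*n - 2))) := by
        rw [hrec]
        have hsum_le : ((KK n (w-1) : ℕ) : ℝ)
              + ∑ j ∈ Finset.Icc 2 w, ((KK n (w-j) : ℕ) : ℝ) * (∑ d ∈ j.divisors, (d:ℝ))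
            ≤ (c*n)^(w-1) * (1 + (45/4)/(c*n - 2)) := by
          have : (c*n)^(w-1) * (1 + (45/4)/(c*n - 2))
              = (c*n)^(w-1) + (45/4) * ((c*n)^(w-1) / (c*n - 2)) := by
            field_simp
          rw [this]
          exact add_le_add hKw1 htail
        exact mul_le_mul_of_nonneg_left hsum_le hnpos.le
      have hstep : (n:ℝ) * ((c*n)^(w-1) * (1 + (45/4)/(c*n - 2)))
          ≤ (w:ℝ) * (c*n)^w := by
        calc (n:ℝ) * ((c*n)^(w-1) * (1 + (45/4)/(c*n - 2)))
            ≤ (n:ℝ) * ((c*n)^(w-1) * ((w:ℝ) * c)) := by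
              apply mul_le_mul_of_nonneg_left _ hnpos.le
              exact mul_le_mul_of_nonneg_left hcoef (by positivity)
          _ = (w:ℝ) * (c*n)^w := by rw [hpw]; ring
      have := le_trans hfin hstep
      exact le_of_mul_le_mul_left this hwpos

private lemma sigma_partition_eta (k : ℕ) (p : Nat.Partition k) :
    (⟨p.parts.sum, ⟨p.parts, fun {y} hy => p.parts_pos hy, rfl⟩⟩ : Σ m, Nat.Partition m)
      = ⟨k, p⟩ := by
  obtain ⟨parts, pos, sums⟩ := p
  subst sums
  rfl

/-- `multipartitions b w` is the number of `b`-multipartitions of `w`, i.e. the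
number of `b`-tuples `(λ₁, …, λ_b)` of integer partitions with `|λ₁| + ⋯ + |λ_b| = w`. -/
noncomputable def multipartitions (b w : ℕ) : ℕ :=
  Nat.card {f : Fin b → Σ n : ℕ, n.Partition // (∑ i, (f i).1) = w}

lemma multipartitions_eq_KK (n w : ℕ) : multipartitions n w = KK n w := by
  apply Nat.card_congr
  refine ⟨fun f => ⟨fun i => (f.1 i).2.parts, fun i y hy => (f.1 i).2.parts_pos hy, ?_⟩,
    fun g => ⟨fun i => ⟨(g.1 i).sum, ⟨g.1 i, fun {y} hy => g.2.1 i y hy, rfl⟩⟩, g.2.2⟩, ?_, ?_⟩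
  · calc ∑ i, (f.1 i).2.parts.sum = ∑ i, (f.1 i).1 :=
          Finset.sum_congr rfl fun i _ => (f.1 i).2.parts_sum
      _ = w := f.2
  · intro f
    apply Subtype.ext; funext i
    exact sigma_partition_eta _ _
  · intro g
    apply Subtype.ext; funext i
    rfl


theorem multipartitions_mul_le (b w x : ℕ) (hb : 4 ≤ b) (hw : 5 ≤ w) (hx : 5 ≤ x) :
    (multipartitions (b * x) w : ℝ) ≤
      ((b * x : ℕ) : ℝ) ^ (w : ℕ) * (x : ℝ) ^ (-0.73 * (w : ℝ) / Real.log x) := by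
  have hn : 20 ≤ b * x := le_trans (by norm_num) (Nat.mul_le_mul hb hx)
  have hx1 : (1:ℝ) < (x:ℝ) := by
    have : (5:ℝ) ≤ (x:ℝ) := by exact_mod_cast hx
    linarith
  have hlog : 0 < Real.log x := Real.log_pos hx1
  have hxpos : (0:ℝ) < (x:ℝ) := by linarith
  have hrpow : (x:ℝ) ^ (-0.73 * (w:ℝ) / Real.log x) = Real.exp (-0.73 * (w:ℝ)) := by
    rw [Real.rpow_def_of_pos hxpos]
    congr 1
    field_simp
  have hexp : Real.exp (-0.73 * (w:ℝ)) = (Real.exp (-0.73)) ^ w := by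
    rw [mul_comm, ← Real.exp_nat_mul]
  rw [multipartitions_eq_KK, hrpow, hexp]
  calc ((KK (b*x) w : ℕ) : ℝ) ≤ (Real.exp (-0.73) * ((b*x : ℕ) : ℝ)) ^ w :=
        KK_le w hw (b*x) hn
    _ = ((b * x : ℕ) : ℝ) ^ (w : ℕ) * (Real.exp (-0.73)) ^ w := by
        rw [mul_pow]; ring
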